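/- Let f(U) = (1/2)‖UUᵀ - M*‖_F² with M* = V*V*ᵀ of rank r. For any U with dist_F(U, X*) ≤ (1/3)(σ_r*)^{1/2}, one has ‖∇f(U)‖_F² ≤ 10σ₁*·⟨∇f(U), U - P_{X*}(U)⟩, where σ₁* = σ₁(M*). -/

import Mathlib

/-!
Write `X = V*R` for the closest point of `X*` to `U` and `Δ = U - X`. Minimality of `X` over
all rotations `X Q` forces `XᵀU`, hence `S = XᵀΔ`, to be symmetric: otherwise a plane rotation
would increase `tr(XᵀU Q)`. The residual splits as `E = UUᵀ - XXᵀ = (ΔXᵀ + XΔᵀ) + ΔΔᵀ`, and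
symmetry of `S` gives `‖ΔXᵀ + XΔᵀ‖² = 2 tr(XᵀX ΔᵀΔ) + 2‖S‖² ≥ 2σ_r ‖Δ‖² + 2‖S‖²`. Since
`‖Δ‖² ≤ σ_r / 9`, this yields `‖E‖² ≥ (16/9) σ_r ‖Δ‖²`, so the quadratic term `ΔΔᵀ` is at most
`‖E‖ / 4`, and `⟨∇f(U), Δ⟩ = ‖E‖² + ⟨E, ΔΔᵀ⟩ ≥ (3/4)‖E‖²`. On the other side
`‖∇f(U)‖ ≤ 2‖U‖₂‖E‖` with `‖U‖₂ ≤ ‖X‖₂ + ‖Δ‖ ≤ (4/3)√σ₁`, and `4 · 16/9 ≤ 10 · 3/4`.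
-/

open Matrix

/-- The Frobenius norm of a real matrix. -/
noncomputable def frob {m n : ℕ} (A : Matrix (Fin m) (Fin n) ℝ) : ℝ :=
  Real.sqrt (∑ i, ∑ j, (A i j) ^ 2)

/-- The trace inner product `⟨A, B⟩ = tr(AᵀB)`. -/
def mip {m n : ℕ} (A B : Matrix (Fin m) (Fin n) ℝ) : ℝ :=
  (Aᵀ * B).trace

/-- The gradient of `f(U) = (1/2)‖UUᵀ - M‖_F²`. -/
noncomputable def gradf {d r : ℕ} (M : Matrix (Fin d) (Fin d) ℝ)
    (U : Matrix (Fin d) (Fin r) ℝ) : Matrix (Fin d) (Fin r) ℝ :=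
  (2 : ℝ) • ((U * Uᵀ - M) * U)

section Frobenius

open scoped Matrix.Norms.Frobenius

variable {m n p : ℕ}

lemma mip_eq_inner (A B : Matrix (Fin m) (Fin n) ℝ) :
    mip A B = inner ℝ (WithLp.toLp 2 A.vec) (WithLp.toLp 2 B.vec) := by
  rw [mip, ← vec_dotProduct_vec, EuclideanSpace.inner_toLp_toLp, dotProduct_comm]
  rfl

lemma frob_eq_norm_vec (A : Matrix (Fin m) (Fin n) ℝ) : frob A = ‖WithLp.toLp 2 A.vec‖ := by
  rw [EuclideanSpace.norm_eq, frob, Fintype.sum_prod_type, Finset.sum_comm]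
  simp [vec]

lemma frob_eq_frobenius_norm (A : Matrix (Fin m) (Fin n) ℝ) : frob A = ‖A‖ := by
  rw [frobenius_norm_def, frob, Real.sqrt_eq_rpow]
  simp

lemma frob_nonneg (A : Matrix (Fin m) (Fin n) ℝ) : 0 ≤ frob A := Real.sqrt_nonneg _

lemma mip_self (A : Matrix (Fin m) (Fin n) ℝ) : mip A A = frob A ^ 2 := by
  rw [mip_eq_inner, frob_eq_norm_vec, real_inner_self_eq_norm_sq]

lemma abs_mip_le (A B : Matrix (Fin m) (Fin n) ℝ) : |mip A B| ≤ frob A * frob B := by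
  rw [mip_eq_inner, frob_eq_norm_vec, frob_eq_norm_vec]
  exact abs_real_inner_le_norm _ _

lemma mip_comm (A B : Matrix (Fin m) (Fin n) ℝ) : mip A B = mip B A := by
  rw [mip, mip, ← trace_transpose, transpose_mul, transpose_transpose]

lemma mip_add_left (A B C : Matrix (Fin m) (Fin n) ℝ) : mip (A + B) C = mip A C + mip B C := by
  rw [mip, mip, mip, transpose_add, Matrix.add_mul, trace_add]

lemma mip_add_right (A B C : Matrix (Fin m) (Fin n) ℝ) : mip A (B + C) = mip A B + mip A C := by
  rw [mip, mip, mip, Matrix.mul_add, trace_add]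

lemma mip_smul_left (c : ℝ) (A B : Matrix (Fin m) (Fin n) ℝ) : mip (c • A) B = c * mip A B := by
  rw [mip, mip, transpose_smul, Matrix.smul_mul, trace_smul, smul_eq_mul]

lemma frob_add_sq (A B : Matrix (Fin m) (Fin n) ℝ) :
    frob (A + B) ^ 2 = frob A ^ 2 + 2 * mip A B + frob B ^ 2 := by
  rw [← mip_self, ← mip_self, ← mip_self, mip_add_left, mip_add_right, mip_add_right, mip_comm B A]
  ring

lemma frob_sub_sq (A B : Matrix (Fin m) (Fin n) ℝ) :
    frob (A - B) ^ 2 = frob A ^ 2 - 2 * (Bᵀ * A).trace + frob B ^ 2 := by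
  simp only [← mip_self, mip, transpose_sub, Matrix.sub_mul, Matrix.mul_sub, trace_sub]
  rw [← trace_transpose (Aᵀ * B), transpose_mul, transpose_transpose]
  ring

lemma frob_smul (c : ℝ) (A : Matrix (Fin m) (Fin n) ℝ) : frob (c • A) = |c| * frob A := by
  simp only [frob_eq_frobenius_norm]
  exact norm_smul c A

lemma frob_transpose (A : Matrix (Fin m) (Fin n) ℝ) : frob Aᵀ = frob A := by
  simp only [frob_eq_frobenius_norm]
  exact frobenius_norm_transpose A

lemma frob_mul_le (A : Matrix (Fin m) (Fin n) ℝ) (B : Matrix (Fin n) (Fin p) ℝ) :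
    frob (A * B) ≤ frob A * frob B := by
  simp only [frob_eq_frobenius_norm]
  exact frobenius_norm_mul A B

lemma frob_mul_transpose_self_le (A : Matrix (Fin m) (Fin n) ℝ) : frob (A * Aᵀ) ≤ frob A ^ 2 := by
  simpa [frob_transpose, sq] using frob_mul_le A Aᵀ

lemma frob_mul_transpose_sq (A B : Matrix (Fin m) (Fin n) ℝ) :
    frob (A * Bᵀ) ^ 2 = (Aᵀ * A * (Bᵀ * B)).trace := by
  rw [← mip_self, mip, transpose_mul, transpose_transpose, Matrix.mul_assoc, trace_mul_comm]
  simp only [Matrix.mul_assoc]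

lemma frob_mul_orthogonal (A : Matrix (Fin m) (Fin n) ℝ) {Q : Matrix (Fin n) (Fin n) ℝ}
    (hQ : Q ∈ orthogonalGroup (Fin n) ℝ) : frob (A * Q) = frob A := by
  rw [← sq_eq_sq₀ (frob_nonneg _) (frob_nonneg _), ← mip_self, ← mip_self, mip, mip,
    transpose_mul, Matrix.mul_assoc, trace_mul_comm, Matrix.mul_assoc, Matrix.mul_assoc,
    (mem_orthogonalGroup_iff _ _).mp hQ, Matrix.mul_one]

lemma frob_replicateCol (v : Fin m → ℝ) : frob (replicateCol (Fin 1) v) = ‖WithLp.toLp 2 v‖ := by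
  rw [frob_eq_frobenius_norm]
  exact frobenius_norm_replicateCol v

lemma mul_orthogonal_mul_transpose (A : Matrix (Fin m) (Fin n) ℝ) {R : Matrix (Fin n) (Fin n) ℝ}
    (hR : R ∈ orthogonalGroup (Fin n) ℝ) : A * R * (A * R)ᵀ = A * Aᵀ := by
  rw [transpose_mul, Matrix.mul_assoc, ← Matrix.mul_assoc R, (mem_orthogonalGroup_iff _ _).mp hR,
    Matrix.one_mul]

end Frobenius

section OperatorNorm

open scoped MatrixOrder Matrix.Norms.L2Operator

variable {m n p : ℕ}

lemma le_l2_opNorm_of_mem_spectrum {A : Matrix (Fin n) (Fin n) ℝ} {x : ℝ}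
    (hx : x ∈ spectrum ℝ A) : x ≤ ‖A‖ := by
  have hone : ‖(1 : Matrix (Fin n) (Fin n) ℝ)‖ ≤ 1 := by
    rw [← diagonal_one, l2_opNorm_diagonal]
    exact pi_norm_const_le (1 : ℝ) |>.trans norm_one.le
  calc x ≤ ‖x‖ := Real.le_norm_self x
    _ ≤ ‖A‖ * ‖(1 : Matrix (Fin n) (Fin n) ℝ)‖ := spectrum.norm_le_norm_mul_of_mem hx
    _ ≤ ‖A‖ := mul_le_of_le_one_right (norm_nonneg A) hone

lemma l2_opNorm_transpose (A : Matrix (Fin m) (Fin n) ℝ) : ‖Aᵀ‖ = ‖A‖ := by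
  rw [← conjTranspose_eq_transpose_of_trivial, l2_opNorm_conjTranspose]

lemma l2_opNorm_transpose_mul_self (A : Matrix (Fin m) (Fin n) ℝ) : ‖Aᵀ * A‖ = ‖A‖ ^ 2 := by
  rw [← conjTranspose_eq_transpose_of_trivial, l2_opNorm_conjTranspose_mul_self, sq]

lemma l2_opNorm_mul_transpose_self (A : Matrix (Fin m) (Fin n) ℝ) : ‖A * Aᵀ‖ = ‖A‖ ^ 2 := by
  simpa [l2_opNorm_transpose] using l2_opNorm_transpose_mul_self Aᵀ

lemma norm_toEuclideanCLM_mul_transpose_self (A : Matrix (Fin m) (Fin n) ℝ) :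
    ‖toEuclideanCLM (𝕜 := ℝ) (n := Fin m) (A * Aᵀ)‖ = ‖A‖ ^ 2 :=
  l2_opNorm_mul_transpose_self A

lemma le_l2_opNorm_sq_of_le_eigenvalues {A : Matrix (Fin m) (Fin n) ℝ} (hA : (Aᵀ * A).IsHermitian)
    {c : ℝ} (hc : ∀ i, c ≤ hA.eigenvalues i) (i : Fin n) : c ≤ ‖A‖ ^ 2 :=
  (hc i).trans <| l2_opNorm_transpose_mul_self A ▸
    le_l2_opNorm_of_mem_spectrum (hA.eigenvalues_mem_spectrum_real i)

lemma Matrix.IsHermitian.algebraMap_le_of_le_eigenvalues {A : Matrix (Fin n) (Fin n) ℝ}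
    (hA : A.IsHermitian) {c : ℝ} (hc : ∀ i, c ≤ hA.eigenvalues i) : algebraMap ℝ _ c ≤ A := by
  rw [algebraMap_le_iff_le_spectrum hA.isSelfAdjoint, hA.spectrum_real_eq_range_eigenvalues]
  rintro _ ⟨i, rfl⟩
  exact hc i

lemma mul_transpose_self_le_algebraMap (A : Matrix (Fin m) (Fin n) ℝ) :
    A * Aᵀ ≤ algebraMap ℝ _ (‖A‖ ^ 2) := by
  have hA : (A * Aᵀ).IsHermitian := by
    simpa only [conjTranspose_eq_transpose_of_trivial] using isHermitian_mul_conjTranspose_self A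
  rw [← l2_opNorm_mul_transpose_self, le_algebraMap_iff_spectrum_le hA.isSelfAdjoint]
  exact fun _ => le_l2_opNorm_of_mem_spectrum

lemma algebraMap_le_transpose_mul_self_mul {c : ℝ} {A : Matrix (Fin m) (Fin n) ℝ}
    (h : algebraMap ℝ _ c ≤ Aᵀ * A) {R : Matrix (Fin n) (Fin n) ℝ}
    (hR : R ∈ orthogonalGroup (Fin n) ℝ) : algebraMap ℝ _ c ≤ (A * R)ᵀ * (A * R) := by
  have := star_left_conjugate_le_conjugate h R
  rw [star_eq_conjTranspose, conjTranspose_eq_transpose_of_trivial, ← Algebra.commutes,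
    Matrix.mul_assoc, (mem_orthogonalGroup_iff' _ _).mp hR, Matrix.mul_one] at this
  simpa only [transpose_mul, Matrix.mul_assoc] using this

lemma l2_opNorm_mul_orthogonal (A : Matrix (Fin m) (Fin n) ℝ) {R : Matrix (Fin n) (Fin n) ℝ}
    (hR : R ∈ orthogonalGroup (Fin n) ℝ) : ‖A * R‖ = ‖A‖ := by
  rw [← sq_eq_sq₀ (norm_nonneg _) (norm_nonneg _), ← l2_opNorm_mul_transpose_self,
    ← l2_opNorm_mul_transpose_self, mul_orthogonal_mul_transpose A hR]

lemma trace_mul_transpose_mul_self_le {A B : Matrix (Fin n) (Fin n) ℝ} (h : A ≤ B)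
    (X : Matrix (Fin m) (Fin n) ℝ) : (A * (Xᵀ * X)).trace ≤ (B * (Xᵀ * X)).trace := by
  have := (Matrix.le_iff.mp h).mul_mul_conjTranspose_same X |>.trace_nonneg
  rwa [conjTranspose_eq_transpose_of_trivial, trace_mul_cycle, trace_mul_comm, Matrix.sub_mul,
    trace_sub, sub_nonneg] at this

lemma trace_algebraMap_mul (c : ℝ) (A : Matrix (Fin n) (Fin n) ℝ) :
    (algebraMap ℝ _ c * A).trace = c * A.trace := by
  rw [Algebra.algebraMap_eq_smul_one, Matrix.smul_mul, Matrix.one_mul, trace_smul, smul_eq_mul]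

lemma l2_opNorm_le_frob (A : Matrix (Fin m) (Fin n) ℝ) : ‖A‖ ≤ frob A := by
  rw [l2_opNorm_def]
  refine ContinuousLinearMap.opNorm_le_bound _ (frob_nonneg A) fun x => ?_
  calc _ = frob (A * replicateCol (Fin 1) x) := by
        rw [← replicateCol_mulVec, frob_replicateCol]; rfl
    _ ≤ frob A * frob (replicateCol (Fin 1) x) := frob_mul_le _ _
    _ = frob A * ‖x‖ := by rw [frob_replicateCol]

lemma frob_mul_le_frob_mul_l2_opNorm (A : Matrix (Fin m) (Fin n) ℝ)
    (B : Matrix (Fin n) (Fin p) ℝ) : frob (A * B) ≤ frob A * ‖B‖ := by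
  have key : frob (A * B) ^ 2 ≤ (‖B‖ * frob A) ^ 2 := by
    calc frob (A * B) ^ 2 = (B * Bᵀ * (Aᵀ * A)).trace := by
          rw [← mip_self, mip, transpose_mul, Matrix.mul_assoc, trace_mul_comm, Matrix.mul_assoc,
            Matrix.mul_assoc, ← Matrix.mul_assoc, trace_mul_comm]
      _ ≤ (algebraMap ℝ _ (‖B‖ ^ 2) * (Aᵀ * A)).trace :=
          trace_mul_transpose_mul_self_le (mul_transpose_self_le_algebraMap B) A
      _ = (‖B‖ * frob A) ^ 2 := by rw [trace_algebraMap_mul, ← mip, mip_self]; ring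
  rw [mul_comm]
  exact (pow_le_pow_iff_left₀ (frob_nonneg _) (mul_nonneg (norm_nonneg _) (frob_nonneg A))
    two_ne_zero).mp key

end OperatorNorm

section Procrustes

variable {r : ℕ}

def givens (i j : Fin r) (c s : ℝ) : Matrix (Fin r) (Fin r) ℝ :=
  1 + (c - 1) • (single i i 1 + single j j 1) + s • (single i j 1 - single j i 1)

lemma givens_transpose (i j : Fin r) (c s : ℝ) : (givens i j c s)ᵀ = givens i j c (-s) := by
  simp only [givens, transpose_add, transpose_smul, transpose_sub, transpose_one, transpose_single]
  module

lemma givens_mul_givens_neg {i j : Fin r} (hij : i ≠ j) {c s : ℝ} (hcs : c ^ 2 + s ^ 2 = 1) :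
    givens i j c s * givens i j c (-s) = 1 := by
  simp only [givens, Matrix.mul_add, Matrix.add_mul, Matrix.mul_sub, Matrix.sub_mul,
    Matrix.smul_mul, Matrix.mul_smul, Matrix.one_mul, single_mul_single_same,
    single_mul_single_of_ne (1 : ℝ) _ _ _ hij, single_mul_single_of_ne (1 : ℝ) _ _ _ hij.symm,
    mul_one]
  linear_combination (norm := module) hcs • (single i i (1 : ℝ) + single j j 1)

lemma givens_mem_orthogonalGroup {i j : Fin r} (hij : i ≠ j) {c s : ℝ}
    (hcs : c ^ 2 + s ^ 2 = 1) : givens i j c s ∈ orthogonalGroup (Fin r) ℝ := by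
  rw [mem_orthogonalGroup_iff, givens_transpose, givens_mul_givens_neg hij hcs]

lemma trace_mul_givens (W : Matrix (Fin r) (Fin r) ℝ) (i j : Fin r) (c s : ℝ) :
    (W * givens i j c s).trace = W.trace + (c - 1) * (W i i + W j j) + s * (W j i - W i j) := by
  simp only [givens, Matrix.mul_add, Matrix.mul_sub, Matrix.mul_smul, trace_add, trace_sub,
    trace_smul, trace_mul_single, MulOpposite.smul_eq_mul_unop, MulOpposite.unop_op, smul_eq_mul,
    mul_one]

lemma eq_zero_of_forall_mul_le_sq_mul {a b : ℝ} (h : ∀ t : ℝ, t * b ≤ t ^ 2 * a) : b = 0 := by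
  have hD : 0 < |a| + 1 := by positivity
  have ht := h (b / (|a| + 1))
  rw [div_mul_eq_mul_div, div_pow, div_mul_eq_mul_div, div_le_div_iff₀ hD (by positivity)] at ht
  nlinarith [le_abs_self a, sq_nonneg b, mul_nonneg (sq_nonneg b) (abs_nonneg a)]

lemma isSymm_of_forall_trace_mul_le {W : Matrix (Fin r) (Fin r) ℝ}
    (h : ∀ Q ∈ orthogonalGroup (Fin r) ℝ, (W * Q).trace ≤ W.trace) : W.IsSymm := by
  refine IsSymm.ext fun i j => ?_
  rcases eq_or_ne j i with rfl | hji
  · rfl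
  refine (sub_eq_zero.mp (eq_zero_of_forall_mul_le_sq_mul (a := W j j + W i i) fun t => ?_)).symm
  -- rotate by the angle with `(cos, sin) = ((1 - t²) / (1 + t²), 2t / (1 + t²))`: the trace bound
  -- becomes `t (W i j - W j i) ≤ t² (W j j + W i i)`
  have hD : 0 < 1 + t ^ 2 := by positivity
  have hcs : ((1 - t ^ 2) / (1 + t ^ 2)) ^ 2 + (2 * t / (1 + t ^ 2)) ^ 2 = 1 := by
    field_simp
    ring
  have := h _ (givens_mem_orthogonalGroup hji hcs)
  rw [trace_mul_givens] at this
  field_simp at this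
  nlinarith

lemma transpose_mem_orthogonalGroup {Q : Matrix (Fin r) (Fin r) ℝ}
    (hQ : Q ∈ orthogonalGroup (Fin r) ℝ) : Qᵀ ∈ orthogonalGroup (Fin r) ℝ := by
  rw [mem_orthogonalGroup_iff, transpose_transpose]
  exact (mem_orthogonalGroup_iff' _ _).mp hQ

lemma isSymm_transpose_mul_sub_of_forall_frob_sub_le {d : ℕ} {U X : Matrix (Fin d) (Fin r) ℝ}
    (h : ∀ Q ∈ orthogonalGroup (Fin r) ℝ, frob (U - X) ≤ frob (U - X * Q)) :
    (Xᵀ * (U - X)).IsSymm := by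
  have hXU : (Xᵀ * U).IsSymm := isSymm_of_forall_trace_mul_le fun Q hQ => by
    have hQt := transpose_mem_orthogonalGroup hQ
    have := pow_le_pow_left₀ (frob_nonneg _) (h Qᵀ hQt) 2
    rw [frob_sub_sq, frob_sub_sq, frob_mul_orthogonal X hQt, transpose_mul, transpose_transpose,
      Matrix.mul_assoc, trace_mul_comm Q] at this
    linarith
  have hXX : (Xᵀ * X).IsSymm := by rw [IsSymm, transpose_mul, transpose_transpose]
  rw [Matrix.mul_sub]
  exact hXU.sub hXX

end Procrustes

section Regularity

open scoped MatrixOrder Matrix.Norms.L2Operator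

variable {d r : ℕ}

lemma add_mul_transpose_add_sub (X Δ : Matrix (Fin d) (Fin r) ℝ) :
    (X + Δ) * (X + Δ)ᵀ - X * Xᵀ = (Δ * Xᵀ + X * Δᵀ) + Δ * Δᵀ := by
  simp only [transpose_add, Matrix.add_mul, Matrix.mul_add]
  abel

lemma frob_mul_transpose_add_sq {X Δ : Matrix (Fin d) (Fin r) ℝ} (hS : (Xᵀ * Δ).IsSymm) :
    frob (Δ * Xᵀ + X * Δᵀ) ^ 2 = 2 * (Xᵀ * X * (Δᵀ * Δ)).trace + 2 * frob (Xᵀ * Δ) ^ 2 := by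
  have hcross : mip (Δ * Xᵀ) (X * Δᵀ) = frob (Xᵀ * Δ) ^ 2 := by
    rw [← mip_self, mip, mip, hS.eq, transpose_mul, transpose_transpose, Matrix.mul_assoc,
      trace_mul_comm, Matrix.mul_assoc, Matrix.mul_assoc, ← Matrix.mul_assoc Δᵀ, ← hS.eq,
      transpose_mul, transpose_transpose, Matrix.mul_assoc]
  rw [frob_add_sq, hcross, frob_mul_transpose_sq, frob_mul_transpose_sq, trace_mul_comm (Δᵀ * Δ)]
  ring

lemma mip_mul_transpose_add {X Δ : Matrix (Fin d) (Fin r) ℝ} (hS : (Xᵀ * Δ).IsSymm) :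
    mip (Δ * Xᵀ + X * Δᵀ) (Δ * Δᵀ) = 2 * mip (Xᵀ * Δ) (Δᵀ * Δ) := by
  have h₁ : mip (Δ * Xᵀ) (Δ * Δᵀ) = mip (Xᵀ * Δ) (Δᵀ * Δ) := by
    rw [mip, mip, transpose_mul, transpose_transpose, transpose_mul, transpose_transpose,
      Matrix.mul_assoc, trace_mul_comm, Matrix.mul_assoc, Matrix.mul_assoc,
      ← Matrix.mul_assoc Δᵀ Δ, trace_mul_comm]
  have h₂ : mip (X * Δᵀ) (Δ * Δᵀ) = mip (Xᵀ * Δ) (Δᵀ * Δ) := by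
    rw [mip, mip, hS.eq, transpose_mul, transpose_transpose, Matrix.mul_assoc, trace_mul_comm]
    simp only [Matrix.mul_assoc]
  rw [mip_add_left, h₁, h₂]
  ring

lemma le_frob_residual_sq {X Δ : Matrix (Fin d) (Fin r) ℝ} {σ : ℝ} (hS : (Xᵀ * Δ).IsSymm)
    (hσ : algebraMap ℝ _ σ ≤ Xᵀ * X) (hΔ : frob Δ ^ 2 ≤ σ / 9) :
    16 / 9 * σ * frob Δ ^ 2 ≤ frob ((X + Δ) * (X + Δ)ᵀ - X * Xᵀ) ^ 2 := by
  have htrace : σ * frob Δ ^ 2 ≤ (Xᵀ * X * (Δᵀ * Δ)).trace := by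
    have h := trace_mul_transpose_mul_self_le hσ Δ
    rwa [trace_algebraMap_mul, show (Δᵀ * Δ).trace = frob Δ ^ 2 from mip_self Δ] at h
  have hcross : -(frob (Xᵀ * Δ) * frob Δ ^ 2) ≤ mip (Xᵀ * Δ) (Δᵀ * Δ) := by
    have h := abs_mip_le (Xᵀ * Δ) (Δᵀ * Δ)
    have h' := frob_mul_le Δᵀ Δ
    rw [frob_transpose] at h'
    nlinarith [neg_abs_le (mip (Xᵀ * Δ) (Δᵀ * Δ)), frob_nonneg (Xᵀ * Δ)]
  rw [add_mul_transpose_add_sub, frob_add_sq, frob_mul_transpose_add_sq hS,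
    mip_mul_transpose_add hS]
  nlinarith [sq_nonneg (frob (Xᵀ * Δ) - frob Δ ^ 2), sq_nonneg (frob (Δ * Δᵀ)), sq_nonneg (frob Δ)]

lemma mip_gradf {M : Matrix (Fin d) (Fin d) ℝ} (hM : Mᵀ = M) (U Δ : Matrix (Fin d) (Fin r) ℝ) :
    mip (gradf M U) Δ = mip (U * Uᵀ - M) (Δ * Uᵀ + U * Δᵀ) := by
  set E := U * Uᵀ - M
  have hE : Eᵀ = E := by rw [transpose_sub, transpose_mul, transpose_transpose, hM]
  rw [gradf, mip_smul_left, mip_add_right, mip, mip, mip, transpose_mul, hE, two_mul]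
  congr 1
  · rw [← Matrix.mul_assoc E, trace_mul_comm (E * Δ), Matrix.mul_assoc]
  · rw [← trace_transpose, transpose_mul, transpose_mul, transpose_transpose, hE,
      trace_mul_comm, Matrix.mul_assoc]

lemma le_mip_gradf {X Δ : Matrix (Fin d) (Fin r) ℝ}
    (hΔ : frob (Δ * Δᵀ) ≤ frob ((X + Δ) * (X + Δ)ᵀ - X * Xᵀ) / 4) :
    3 / 4 * frob ((X + Δ) * (X + Δ)ᵀ - X * Xᵀ) ^ 2 ≤ mip (gradf (X * Xᵀ) (X + Δ)) Δ := by
  set E := (X + Δ) * (X + Δ)ᵀ - X * Xᵀ with hE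
  have hsplit : Δ * (X + Δ)ᵀ + (X + Δ) * Δᵀ = E + Δ * Δᵀ := by
    rw [hE, add_mul_transpose_add_sub]
    simp only [transpose_add, Matrix.add_mul, Matrix.mul_add]
    abel
  rw [mip_gradf (by rw [transpose_mul, transpose_transpose]), hsplit, mip_add_right, mip_self]
  have := abs_mip_le E (Δ * Δᵀ)
  nlinarith [neg_abs_le (mip E (Δ * Δᵀ)), frob_nonneg E]

lemma frob_gradf_le (M : Matrix (Fin d) (Fin d) ℝ) (U : Matrix (Fin d) (Fin r) ℝ) :
    frob (gradf M U) ≤ 2 * ‖U‖ * frob (U * Uᵀ - M) := by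
  rw [gradf, frob_smul, abs_two, mul_assoc, mul_comm ‖U‖]
  exact mul_le_mul_of_nonneg_left (frob_mul_le_frob_mul_l2_opNorm _ _) zero_le_two

lemma frob_gradf_sq_le_mul_mip {X Δ : Matrix (Fin d) (Fin r) ℝ} {σ : ℝ}
    (hS : (Xᵀ * Δ).IsSymm) (hσ : algebraMap ℝ _ σ ≤ Xᵀ * X) (hσX : σ ≤ ‖X‖ ^ 2)
    (hΔ : frob Δ ^ 2 ≤ σ / 9) :
    frob (gradf (X * Xᵀ) (X + Δ)) ^ 2 ≤ 10 * ‖X‖ ^ 2 * mip (gradf (X * Xᵀ) (X + Δ)) Δ := by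
  set E := (X + Δ) * (X + Δ)ᵀ - X * Xᵀ
  have hE : 16 / 9 * σ * frob Δ ^ 2 ≤ frob E ^ 2 := le_frob_residual_sq hS hσ hΔ
  have hΔΔ : frob (Δ * Δᵀ) ≤ frob E / 4 := by
    have h4 : (4 * frob Δ ^ 2) ^ 2 ≤ frob E ^ 2 := by nlinarith [sq_nonneg (frob Δ)]
    have := (pow_le_pow_iff_left₀ (by positivity) (frob_nonneg E) two_ne_zero).mp h4
    linarith [frob_mul_transpose_self_le Δ]
  have hcorr : 3 / 4 * frob E ^ 2 ≤ mip (gradf (X * Xᵀ) (X + Δ)) Δ := le_mip_gradf hΔΔ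
  have hΔX : 3 * frob Δ ≤ ‖X‖ :=
    (pow_le_pow_iff_left₀ (mul_nonneg zero_le_three (frob_nonneg Δ)) (norm_nonneg X)
      two_ne_zero).mp (by nlinarith)
  have hU : ‖X + Δ‖ ≤ 4 / 3 * ‖X‖ := by
    linarith [norm_add_le X Δ, l2_opNorm_le_frob Δ]
  have hgrad : frob (gradf (X * Xᵀ) (X + Δ)) ^ 2 ≤ 64 / 9 * ‖X‖ ^ 2 * frob E ^ 2 := by
    have := frob_nonneg E
    calc _ ≤ (2 * ‖X + Δ‖ * frob E) ^ 2 :=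
          pow_le_pow_left₀ (frob_nonneg _) (frob_gradf_le (X * Xᵀ) (X + Δ)) 2
      _ ≤ (2 * (4 / 3 * ‖X‖) * frob E) ^ 2 := by gcongr
      _ = 64 / 9 * ‖X‖ ^ 2 * frob E ^ 2 := by ring
  nlinarith [sq_nonneg (frob E), sq_nonneg ‖X‖]

end Regularity

theorem matrix_factorization_local_regularity_upper_general {d r : ℕ} (hr : 0 < r)
    (Vs : Matrix (Fin d) (Fin r) ℝ)
    (σr σ1 : ℝ)
    (hherm : (Vsᵀ * Vs).IsHermitian)
    (hσr : σr = haveI : Nonempty (Fin r) := Fin.pos_iff_nonempty.mp hr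
      ⨅ i, hherm.eigenvalues i)
    (hσ1 : σ1 = ‖Matrix.toEuclideanCLM (𝕜 := ℝ) (n := Fin d) (Vs * Vsᵀ)‖)
    (U Us : Matrix (Fin d) (Fin r) ℝ)
    (hUs : ∃ R : Matrix (Fin r) (Fin r) ℝ,
      R * Rᵀ = 1 ∧ Rᵀ * R = 1 ∧ Us = Vs * R)
    (hproj : ∀ R : Matrix (Fin r) (Fin r) ℝ, R * Rᵀ = 1 → Rᵀ * R = 1 →
      frob (U - Us) ≤ frob (U - Vs * R))
    (hclose : frob (U - Us) ≤ 1 / 3 * Real.sqrt σr) :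
    frob (gradf (Vs * Vsᵀ) U) ^ 2 ≤
      10 * σ1 * mip (gradf (Vs * Vsᵀ) U) (U - Us) := by
  have : Nonempty (Fin r) := Fin.pos_iff_nonempty.mp hr
  obtain ⟨R, hRRt, -, rfl⟩ := hUs
  have hR : R ∈ orthogonalGroup (Fin r) ℝ := (mem_orthogonalGroup_iff _ _).mpr hRRt
  obtain ⟨Δ, rfl⟩ : ∃ Δ, U = Vs * R + Δ := ⟨U - Vs * R, by abel⟩
  have hS : ((Vs * R)ᵀ * Δ).IsSymm := by
    refine add_sub_cancel_left (Vs * R) Δ ▸ isSymm_transpose_mul_sub_of_forall_frob_sub_le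
      fun Q hQ => ?_
    have hRQ := mul_mem hR hQ
    rw [Matrix.mul_assoc]
    exact hproj (R * Q) ((mem_orthogonalGroup_iff _ _).mp hRQ)
      ((mem_orthogonalGroup_iff' _ _).mp hRQ)
  have hσr_le : ∀ i, σr ≤ hherm.eigenvalues i := fun i =>
    hσr ▸ ciInf_le (Set.finite_range _).bddBelow i
  have hσr_nonneg : 0 ≤ σr := by
    have hpsd : (Vsᵀ * Vs).PosSemidef := by
      simpa only [conjTranspose_eq_transpose_of_trivial] using posSemidef_conjTranspose_mul_self Vs
    exact hσr ▸ le_ciInf hpsd.eigenvalues_nonneg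
  have hΔ : frob Δ ^ 2 ≤ σr / 9 := by
    rw [add_sub_cancel_left] at hclose
    calc frob Δ ^ 2 ≤ (1 / 3 * Real.sqrt σr) ^ 2 := pow_le_pow_left₀ (frob_nonneg Δ) hclose 2
      _ = σr / 9 := by rw [mul_pow, Real.sq_sqrt hσr_nonneg]; ring
  rw [hσ1, norm_toEuclideanCLM_mul_transpose_self, ← l2_opNorm_mul_orthogonal Vs hR,
    ← mul_orthogonal_mul_transpose Vs hR, add_sub_cancel_left]
  exact frob_gradf_sq_le_mul_mip hS
    (algebraMap_le_transpose_mul_self_mul (hherm.algebraMap_le_of_le_eigenvalues hσr_le) hR)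
    (l2_opNorm_mul_orthogonal Vs hR ▸ le_l2_opNorm_sq_of_le_eigenvalues hherm hσr_le ⟨0, hr⟩) hΔ

/-- For `f(U) = (1/2)‖UUᵀ - M*‖_F²` with `M* = V*V*ᵀ` of rank `r`: for any `U`
within Frobenius distance `(1/3)(σ_r*)^{1/2}` of `X*`, one has
`‖∇f(U)‖_F² ≤ 10σ₁*·⟨∇f(U), U - P_{X*}(U)⟩`, where `σ₁* = σ₁(M*)` is the
largest singular value (the spectral norm) of `M* = V*V*ᵀ`. -/
theorem matrix_factorization_local_regularity_upper {d r : ℕ} (hr : 0 < r)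
    (Vs : Matrix (Fin d) (Fin r) ℝ) (hrank : Vs.rank = r)
    (σr σ1 : ℝ)
    (hherm : (Vsᵀ * Vs).IsHermitian)
    (hσr : σr = haveI : Nonempty (Fin r) := Fin.pos_iff_nonempty.mp hr
      ⨅ i, hherm.eigenvalues i)
    (hσ1 : σ1 = ‖Matrix.toEuclideanCLM (𝕜 := ℝ) (n := Fin d) (Vs * Vsᵀ)‖)
    (U Us : Matrix (Fin d) (Fin r) ℝ)
    (hUs : ∃ R : Matrix (Fin r) (Fin r) ℝ,
      R * Rᵀ = 1 ∧ Rᵀ * R = 1 ∧ Us = Vs * R)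
    (hproj : ∀ R : Matrix (Fin r) (Fin r) ℝ, R * Rᵀ = 1 → Rᵀ * R = 1 →
      frob (U - Us) ≤ frob (U - Vs * R))
    (hclose : frob (U - Us) ≤ 1 / 3 * Real.sqrt σr) :
    frob (gradf (Vs * Vsᵀ) U) ^ 2 ≤
      10 * σ1 * mip (gradf (Vs * Vsᵀ) U) (U - Us) :=
  matrix_factorization_local_regularity_upper_general hr Vs σr σ1 hherm hσr hσ1 U Us hUs hproj
    hclose
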